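/- arXiv:math/0501534 — 10 statements merged into one kernel-verified Lean document; each statement's English description precedes it below -/
import Mathlib

section
/- Let A be a Noetherian Cohen–Macaulay commutative ring, I an ideal of A of height one, and φ : I → A an injective A-module homomorphism whose image is the ideal J ⊆ A. Assume that whenever I ⊆ (a) for some a ∈ A, the element a is a unit of A. Then J has height one in A. -/
/-- The height (codimension) of an ideal: the minimum of the heights of the
prime ideals containing it, the height of a prime being its height as an
element of the prime spectrum ordered by inclusion. -/
noncomputable def idealHeight {A : Type*} [CommRing A] (I : Ideal A) : ℕ∞ :=
  ⨅ (P : PrimeSpectrum A) (_ : I ≤ P.asIdeal), Order.height P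

/-- The grade of an ideal `I`: the maximal length of an `A`-regular sequence
contained in `I`. -/
noncomputable def idealGrade (A : Type*) [CommRing A] (I : Ideal A) : ℕ∞ :=
  sSup {n : ℕ∞ | ∃ rs : List A, (∀ x ∈ rs, x ∈ I) ∧
    RingTheory.Sequence.IsRegular A rs ∧ (rs.length : ℕ∞) = n}

/-- A (Noetherian) ring is Cohen–Macaulay if the grade of every proper ideal
equals its height. -/
def IsCohenMacaulayRing (A : Type*) [CommRing A] : Prop :=
  ∀ I : Ideal A, I ≠ ⊤ → idealGrade A I = idealHeight I

open RingTheory.Sequence Pointwise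

/-! An `A`-linear map `φ : I → A` satisfies `z φ(w) = w φ(z)`, so it behaves like multiplication
by a fraction. By Cohen–Macaulayness `I` contains a regular element `x`, and then `φ x ∈ J` is
regular, so `J` has height at least one. If `J` had height at least two it would contain a regular
sequence `u, v`; writing `u = φ s`, `v = φ t`, the relation `v s = u t` forces `s = u s'`, and then
`w = s' φ(w)` for all `w ∈ I`. So `I ⊆ (s')`, `s'` is a unit by hypothesis, and `J = I` has height
one after all. The same computation with `u = 1` shows that `J` is proper. -/

section Grade

variable {A : Type*} [CommRing A]

lemma idealHeight_top : idealHeight (⊤ : Ideal A) = ⊤ := by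
  simp only [idealHeight, top_le_iff, iInf_eq_top]
  exact fun P hP => absurd hP P.isPrime.ne_top

lemma exists_isRegular_of_lt_idealGrade {I : Ideal A} {n : ℕ} (h : (n : ℕ∞) < idealGrade A I) :
    ∃ rs : List A, (∀ x ∈ rs, x ∈ I) ∧ IsRegular A rs ∧ n < rs.length := by
  obtain ⟨_, ⟨rs, hrsI, hrs, rfl⟩, hlt⟩ := lt_sSup_iff.mp h
  exact ⟨rs, hrsI, hrs, by exact_mod_cast hlt⟩

lemma exists_isSMulRegular_mem_of_pos_idealGrade {I : Ideal A} (h : 0 < idealGrade A I) :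
    ∃ x ∈ I, IsSMulRegular A x := by
  obtain ⟨rs, hrsI, hrs, hlen⟩ := exists_isRegular_of_lt_idealGrade (n := 0) (by simpa using h)
  match rs, hlen with
  | x :: _, _ => exact ⟨x, hrsI x List.mem_cons_self, ((isRegular_cons_iff A _ _).mp hrs).1⟩

lemma exists_isSMulRegular_pair_mem_of_one_lt_idealGrade {I : Ideal A} (h : 1 < idealGrade A I) :
    ∃ u ∈ I, ∃ v ∈ I, IsSMulRegular A u ∧ IsSMulRegular (QuotSMulTop u A) v := by
  obtain ⟨rs, hrsI, hrs, hlen⟩ := exists_isRegular_of_lt_idealGrade (n := 1) (by simpa using h)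
  match rs, hlen with
  | u :: v :: _, _ =>
    simp only [isRegular_cons_iff] at hrs
    exact ⟨u, hrsI u (by simp), v, hrsI v (by simp), hrs.1, hrs.2.1⟩

lemma one_le_idealGrade_of_isSMulRegular {I : Ideal A} (hI : I ≠ ⊤) {x : A} (hxI : x ∈ I)
    (hx : IsSMulRegular A x) : 1 ≤ idealGrade A I := by
  refine le_sSup ⟨[x], by simpa using hxI, IsRegular.cons hx ?_, by simp⟩
  have : Nontrivial (QuotSMulTop x A) := by
    rw [Submodule.Quotient.nontrivial_iff, ← Submodule.ideal_span_singleton_smul, smul_eq_mul,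
      Ideal.mul_top]
    exact fun h => hI (top_le_iff.mp (h ▸ Ideal.span_singleton_le_iff_mem I |>.mpr hxI))
  exact IsRegular.nil A _

end Grade

lemma mem_span_singleton_of_isSMulRegular_quotSMulTop {A : Type*} [CommRing A] {u v s : A}
    (hv : IsSMulRegular (QuotSMulTop u A) v) (h : v * s ∈ Ideal.span {u}) :
    s ∈ Ideal.span {u} := by
  have hsmul_top (a : A) : a ∈ u • (⊤ : Submodule A A) ↔ a ∈ Ideal.span {u} := by
    simp [Submodule.mem_smul_pointwise_iff_exists, Ideal.mem_span_singleton', mul_comm]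
  have h0 : (Submodule.Quotient.mk s : QuotSMulTop u A) = 0 := by
    refine hv ?_
    change v • Submodule.Quotient.mk s = v • (0 : QuotSMulTop u A)
    rwa [smul_zero, ← Submodule.Quotient.mk_smul, Submodule.Quotient.mk_eq_zero, hsmul_top]
  rwa [Submodule.Quotient.mk_eq_zero, hsmul_top] at h0

namespace LinearMap

variable {A : Type*} [CommRing A] {I : Ideal A} (φ : I →ₗ[A] A)

lemma coe_mul_apply_comm (z w : I) : (z : A) * φ w = w * φ z := by
  rw [← smul_eq_mul, ← map_smul, ← smul_eq_mul (w : A), ← map_smul]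
  congr 1
  ext
  exact mul_comm _ _

lemma isSMulRegular_apply_of_injective (hφ : Function.Injective φ) {x : I}
    (hx : IsSMulRegular A (x : A)) : IsSMulRegular A (φ x) := by
  intro a b hab
  have : φ (a • x) = φ (b • x) := by simpa [smul_eq_mul, mul_comm] using hab
  exact hx (by simpa [smul_eq_mul, mul_comm] using congrArg Subtype.val (hφ this))

lemma coe_eq_mul_apply_of_apply_eq_mul {u s' : A} (hu : IsSMulRegular A u) {s : I}
    (hs : φ s = u) (hs' : (s : A) = u * s') (w : I) : (w : A) = s' * φ w := by
  refine hu ?_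
  simp only [smul_eq_mul]
  rw [← mul_assoc, ← hs', coe_mul_apply_comm, hs, mul_comm]

lemma range_eq_of_forall_coe_eq_mul_apply {s' : A} (hs' : IsUnit s')
    (h : ∀ w : I, (w : A) = s' * φ w) : range φ = I := by
  obtain ⟨s', rfl⟩ := hs'
  refine le_antisymm ?_ fun w hw => ⟨(s' : A) • ⟨w, hw⟩, ?_⟩
  · rintro _ ⟨w, rfl⟩
    rw [← s'.inv_mul_cancel_left (φ w), ← h]
    exact I.mul_mem_left _ w.2
  · rw [map_smul, smul_eq_mul, ← h]

lemma range_eq_of_apply_eq_mul (hprin : ∀ a : A, I ≤ Ideal.span {a} → IsUnit a) {u s' : A}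
    (hu : IsSMulRegular A u) {s : I} (hs : φ s = u) (hs' : (s : A) = u * s') : range φ = I := by
  have h := φ.coe_eq_mul_apply_of_apply_eq_mul hu hs hs'
  refine φ.range_eq_of_forall_coe_eq_mul_apply (hprin s' fun w hw => ?_) h
  exact Ideal.mem_span_singleton'.mpr ⟨φ ⟨w, hw⟩, by rw [mul_comm, ← h]⟩

end LinearMap

theorem stmt_0_general {A : Type*} [CommRing A]
    (hCM : IsCohenMacaulayRing A) (I J : Ideal A)
    (φ : I →ₗ[A] A) (hinj : Function.Injective φ)
    (hrange : LinearMap.range φ = J)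
    (hI : idealHeight I = 1)
    (hprin : ∀ a : A, I ≤ Ideal.span {a} → IsUnit a) :
    idealHeight J = 1 := by
  have hItop : I ≠ ⊤ := by
    rintro rfl
    simp [idealHeight_top] at hI
  obtain ⟨x, hxI, hx⟩ := exists_isSMulRegular_mem_of_pos_idealGrade (I := I)
    (by simp [hCM I hItop, hI])
  have hJtop : J ≠ ⊤ := by
    rintro rfl
    obtain ⟨y, hy⟩ : (1 : A) ∈ LinearMap.range φ := hrange ▸ Submodule.mem_top
    exact hItop ((φ.range_eq_of_apply_eq_mul hprin (.one A) hy (one_mul _).symm).symm.trans hrange)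
  have hJpos : 1 ≤ idealHeight J := hCM J hJtop ▸ one_le_idealGrade_of_isSMulRegular hJtop
    (hrange ▸ LinearMap.mem_range_self φ ⟨x, hxI⟩)
    (φ.isSMulRegular_apply_of_injective hinj (x := ⟨x, hxI⟩) hx)
  refine le_antisymm (not_lt.mp fun hlt => ?_) hJpos
  obtain ⟨_, ⟨s, rfl⟩, _, ⟨t, rfl⟩, hu, hv⟩ :=
    hrange ▸ exists_isSMulRegular_pair_mem_of_one_lt_idealGrade (hCM J hJtop ▸ hlt)
  have hsu : (s : A) ∈ Ideal.span {φ s} := mem_span_singleton_of_isSMulRegular_quotSMulTop hv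
    (Ideal.mem_span_singleton'.mpr ⟨t, by rw [φ.coe_mul_apply_comm, mul_comm]⟩)
  obtain ⟨s', hs'⟩ := Ideal.mem_span_singleton'.mp hsu
  have hJI : J = I :=
    hrange ▸ φ.range_eq_of_apply_eq_mul hprin hu rfl (by rw [← hs', mul_comm])
  exact hlt.not_ge (hJI ▸ hI.le)

theorem stmt_0 {A : Type*} [CommRing A] [IsNoetherianRing A]
    (hCM : IsCohenMacaulayRing A) (I J : Ideal A)
    (φ : I →ₗ[A] A) (hinj : Function.Injective φ)
    (hrange : LinearMap.range φ = J)
    (hI : idealHeight I = 1)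
    (hprin : ∀ a : A, I ≤ Ideal.span {a} → IsUnit a) :
    idealHeight J = 1 :=
  stmt_0_general hCM I J φ hinj hrange hI hprin
end

section
/- Let A be a Noetherian integral domain and P a nonzero prime ideal of A which is not principal. If a ∈ A satisfies P ⊆ (a), then a is a unit of A. -/
/-! `a ∉ P`, since otherwise `P = (a)`. Hence every `a y ∈ P` has `y ∈ P`, so `P = aP`, and Nakayama's
lemma for the finitely generated nonzero ideal `P` of a domain gives `(a) = A`. -/

namespace Ideal

variable {R : Type*} [CommRing R]

theorem le_span_singleton_mul_of_le_of_notMem {P : Ideal R} [P.IsPrime] {a : R}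
    (h : P ≤ span {a}) (ha : a ∉ P) : P ≤ span {a} * P := by
  intro x hx
  obtain ⟨y, rfl⟩ := mem_span_singleton'.mp (h hx)
  have hy : y ∈ P := (Ideal.IsPrime.mem_or_mem ‹_› (mul_comm y a ▸ hx)).resolve_left ha
  exact mem_span_singleton_mul.mpr ⟨y, hy, mul_comm a y⟩

-- Nakayama: some `r ≡ 1 mod J` kills `I`, and in a domain a nonzero `I` forces `r = 0`.
theorem eq_top_of_le_mul_self [IsDomain R] {I J : Ideal R} (hfg : I.FG) (hI : I ≠ ⊥)
    (h : I ≤ J * I) : J = ⊤ := by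
  obtain ⟨r, hr1, hr0⟩ :=
    Submodule.exists_sub_one_mem_and_smul_eq_zero_of_fg_of_le_smul J I hfg (smul_eq_mul J I ▸ h)
  obtain ⟨x, hxI, hx0⟩ := Submodule.exists_mem_ne_zero_of_ne_bot hI
  have hr : r = 0 := (mul_eq_zero.mp (hr0 x hxI)).resolve_right hx0
  rw [hr, zero_sub] at hr1
  exact J.eq_top_of_isUnit_mem hr1 isUnit_one.neg

end Ideal

theorem stmt_1 {A : Type*} [CommRing A] [IsDomain A] [IsNoetherianRing A]
    (P : Ideal A) (hprime : P.IsPrime) (hne : P ≠ ⊥)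
    (hnotprin : ¬ P.IsPrincipal)
    (a : A) (h : P ≤ Ideal.span {a}) :
    IsUnit a := by
  have haP : a ∉ P := fun haP =>
    hnotprin ⟨⟨a, le_antisymm h ((Ideal.span_singleton_le_iff_mem P).mpr haP)⟩⟩
  exact Ideal.span_singleton_eq_top.mp <| Ideal.eq_top_of_le_mul_self
    (IsNoetherian.noetherian P) hne (Ideal.le_span_singleton_mul_of_le_of_notMem h haP)
end

section
/- Let A be a Noetherian Cohen–Macaulay integral domain, P a nonzero prime ideal of A of height one which is not principal, and φ : P → A an injective A-module homomorphism whose image is the ideal J ⊆ A. Then J has height one in A. -/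
open scoped Pointwise

private lemma idealHeight_le_of_le {A : Type*} [CommRing A] {I P : Ideal A}
    (hP : P.IsPrime) (h : I ≤ P) :
    idealHeight I ≤ Order.height (⟨P, hP⟩ : PrimeSpectrum A) :=
  iInf₂_le (⟨P, hP⟩ : PrimeSpectrum A) h

private lemma idealHeight_prime_eq {A : Type*} [CommRing A] {P : Ideal A} (hP : P.IsPrime) :
    idealHeight P = Order.height (⟨P, hP⟩ : PrimeSpectrum A) := by
  apply le_antisymm (idealHeight_le_of_le hP le_rfl)
  exact le_iInf₂ fun Q hQ =>
    Order.height_mono (show (⟨P, hP⟩ : PrimeSpectrum A) ≤ Q from hQ)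

theorem stmt_2 {A : Type*} [CommRing A] [IsDomain A] [IsNoetherianRing A]
    (hCM : IsCohenMacaulayRing A)
    (P : Ideal A) (hprime : P.IsPrime) (hne : P ≠ ⊥)
    (hht : idealHeight P = 1) (hnotprin : ¬ P.IsPrincipal)
    (J : Ideal A) (φ : P →ₗ[A] A) (hinj : Function.Injective φ)
    (hrange : LinearMap.range φ = J) :
    idealHeight J = 1 := by
  -- Key identity: for p q ∈ P, p * φ(q) = q * φ(p).
  have key : ∀ p q : ↥P, (p : A) * φ q = (q : A) * φ p := by
    intro p q
    have h1 : φ ((p : A) • q) = (p : A) * φ q := by rw [map_smul, smul_eq_mul]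
    have h2 : φ ((q : A) • p) = (q : A) * φ p := by rw [map_smul, smul_eq_mul]
    rw [← h1, ← h2]
    congr 1
    apply Subtype.ext
    simp [mul_comm]
  -- J is nonzero
  have hJbot : J ≠ ⊥ := by
    obtain ⟨a, haP, hane⟩ := Submodule.ne_bot_iff P |>.mp hne
    intro h
    have hmem : φ ⟨a, haP⟩ ∈ J := hrange ▸ LinearMap.mem_range_self φ _
    rw [h, Submodule.mem_bot] at hmem
    have : (⟨a, haP⟩ : ↥P) = 0 := hinj (by simp [hmem])
    exact hane (by simpa using congrArg Subtype.val this)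
  -- J is proper
  have hJtop : J ≠ ⊤ := by
    intro h
    have h1 : (1 : A) ∈ J := h ▸ trivial
    rw [← hrange] at h1
    obtain ⟨p0, hp0⟩ := h1
    apply hnotprin
    refine ⟨⟨(p0 : A), le_antisymm (fun q hq => ?_) ?_⟩⟩
    · rw [Ideal.submodule_span_eq, Ideal.mem_span_singleton]
      exact ⟨φ ⟨q, hq⟩, by rw [key p0 ⟨q, hq⟩, hp0]; simp⟩
    · rw [Ideal.submodule_span_eq, Ideal.span_le]
      simpa using p0.2
  -- height J ≥ 1
  have hge1 : 1 ≤ idealHeight J := by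
    refine le_iInf₂ fun Q hQ => ?_
    rw [ENat.one_le_iff_ne_zero, ne_eq, Order.height_eq_zero]
    intro hmin
    have hQbot : Q.asIdeal ≤ ⊥ :=
      hmin (show (⟨⊥, Ideal.bot_prime⟩ : PrimeSpectrum A) ≤ Q from bot_le)
    exact hJbot (le_bot_iff.mp (le_trans hQ hQbot))
  by_contra hne1
  have hgt : 2 ≤ idealHeight J := by
    rcases lt_or_ge 1 (idealHeight J) with h | h
    · have := Order.add_one_le_of_lt h
      rwa [one_add_one_eq_two] at this
    · exact absurd (le_antisymm h hge1) hne1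
  have hgrade : 2 ≤ idealGrade A J := by rw [hCM J hJtop]; exact hgt
  -- extract a regular sequence of length ≥ 2 in J
  obtain ⟨n, ⟨rs, hrsJ, hreg, hlen⟩, hn2⟩ :
      ∃ n ∈ {n : ℕ∞ | ∃ rs : List A, (∀ x ∈ rs, x ∈ J) ∧
        RingTheory.Sequence.IsRegular A rs ∧ (rs.length : ℕ∞) = n}, 1 < n := by
    by_contra hcon
    push_neg at hcon
    have : idealGrade A J ≤ 1 := sSup_le hcon
    have h21 : (2 : ℕ∞) ≤ 1 := le_trans hgrade this
    norm_num at h21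
  have hlen2 : 1 < rs.length := by
    rw [← hlen] at hn2
    exact_mod_cast hn2
  obtain ⟨x, y, t, rfl⟩ : ∃ x y t, rs = x :: y :: t := by
    rcases rs with _ | ⟨x, _ | ⟨y, t⟩⟩
    · simp at hlen2
    · simp at hlen2
    · exact ⟨x, y, t, rfl⟩
  have hx : x ∈ J := hrsJ x (by simp)
  have hy : y ∈ J := hrsJ y (by simp)
  rw [RingTheory.Sequence.isRegular_cons_iff] at hreg
  obtain ⟨hxreg, hreg2⟩ := hreg
  rw [RingTheory.Sequence.isRegular_cons_iff] at hreg2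
  obtain ⟨hyreg, -⟩ := hreg2
  have hxne : x ≠ 0 := by
    rintro rfl
    exact one_ne_zero (hxreg (show (0 : A) • (1 : A) = 0 • (0 : A) by simp))
  rw [← hrange] at hx hy
  obtain ⟨px, hpx⟩ := hx
  obtain ⟨py, hpy⟩ := hy
  -- y * px = x * py
  have hrel : y * (px : A) = x * (py : A) := by
    have h := key py px
    rw [hpx, hpy] at h
    rw [mul_comm y, mul_comm x]
    exact h.symm
  -- px ∈ (x)
  have hmem : ((px : A)) ∈ (x • ⊤ : Submodule A A) := by
    have h0 := hyreg (show y • (Submodule.Quotient.mk (px : A) : QuotSMulTop x A) = y • 0 by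
      rw [smul_zero, ← Submodule.Quotient.mk_smul, Submodule.Quotient.mk_eq_zero,
        smul_eq_mul, hrel]
      exact Submodule.smul_mem_pointwise_smul (py : A) x ⊤ trivial)
    rwa [Submodule.Quotient.mk_eq_zero] at h0
  rw [← Submodule.ideal_span_singleton_smul, smul_eq_mul, Ideal.mul_top,
    Ideal.mem_span_singleton] at hmem
  obtain ⟨s, hs⟩ := hmem
  -- every q ∈ P satisfies q = s * φ(q)
  have hq_eq : ∀ q (hq : q ∈ P), q = s * φ ⟨q, hq⟩ := by
    intro q hq
    have h1 : (px : A) * φ ⟨q, hq⟩ = q * x := by rw [key px ⟨q, hq⟩, hpx]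
    have h2 : x * (s * φ ⟨q, hq⟩) = x * q := by
      rw [← mul_assoc, ← hs, h1, mul_comm]
    exact (mul_left_cancel₀ hxne h2).symm
  by_cases hsP : s ∈ P
  · -- P = (s), contradiction with non-principality
    apply hnotprin
    refine ⟨⟨s, le_antisymm (fun q hq => ?_) ?_⟩⟩
    · rw [Ideal.submodule_span_eq, Ideal.mem_span_singleton]
      exact ⟨φ ⟨q, hq⟩, hq_eq q hq⟩
    · rw [Ideal.submodule_span_eq, Ideal.span_le]
      simpa using hsP
  · -- J ≤ P, so height J ≤ height P = 1, contradiction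
    have hJP : J ≤ P := by
      rw [← hrange]
      rintro z ⟨q, rfl⟩
      have hqe := hq_eq (q : A) q.2
      have hmemP : s * φ ⟨(q : A), q.2⟩ ∈ P := hqe ▸ q.2
      rcases hprime.mem_or_mem hmemP with h | h
      · exact absurd h hsP
      · simpa using h
    have hle1 : idealHeight J ≤ 1 := by
      calc idealHeight J ≤ Order.height (⟨P, hprime⟩ : PrimeSpectrum A) :=
            idealHeight_le_of_le hprime hJP
        _ = 1 := by rw [← idealHeight_prime_eq hprime]; exact hht
    exact hne1 (le_antisymm hle1 hge1)
end

section
/- Let A ⊆ B be an extension of commutative rings, let k ≥ 1 and n ≥ 2 be integers, let a_{ij} ∈ A for 1 ≤ i ≤ k+1 and 1 ≤ j ≤ n, and let s_0, …, s_k ∈ B. Assume that a_{i+1,j}·s_p + a_{i,j}·s_{p+1} ∈ A for all 1 ≤ i ≤ k, 1 ≤ j ≤ n and 0 ≤ p ≤ k−1. Then for all indices 0 ≤ j, m ≤ k, 1 ≤ i, l ≤ k+1 and 1 ≤ t ≤ n with l + m = i + j, the element a_{i,t}·s_j − (−1)^{j−m}·a_{l,t}·s_m lies in A. -/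
lemma val_neg_one_zpow {B : Type*} [CommRing B] (z : ℤ) :
    (((-1 : Bˣ) ^ z : Bˣ) : B) = (-1 : B) ^ z.natAbs := by
  have hinv : (-1 : Bˣ)⁻¹ = -1 := by
    apply inv_eq_of_mul_eq_one_right; simp
  rcases Int.natAbs_eq z with h | h
  · rw [h, zpow_natCast, Units.val_pow_eq_pow_val]
    simp [Int.natAbs_abs]
  · rw [h, zpow_neg, zpow_natCast, ← inv_pow, hinv, Units.val_pow_eq_pow_val]
    simp [Int.natAbs_abs]

lemma aux_telescope {B : Type*} [CommRing B] (A : Subring B)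
    (k n : ℕ) (a : ℕ → ℕ → B) (s : ℕ → B)
    (hlin : ∀ i j p, 1 ≤ i → i ≤ k → 1 ≤ j → j ≤ n → p ≤ k - 1 →
      a (i + 1) j * s p + a i j * s (p + 1) ∈ A) :
    ∀ d i m t, 1 ≤ i → i + d ≤ k + 1 → m + d ≤ k → 1 ≤ t → t ≤ n →
      a i t * s (m + d) - (-1 : B) ^ d * (a (i + d) t * s m) ∈ A := by
  intro d
  induction d with
  | zero =>
    intro i m t _ _ _ _ _
    simpa using A.zero_mem
  | succ d ih =>
    intro i m t hi hil hmd ht htn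
    have hv : a (i + 1) t * s (m + d) + a i t * s (m + d + 1) ∈ A :=
      hlin i t (m + d) hi (by omega) ht htn (by omega)
    have hih : a (i + 1) t * s (m + d) - (-1 : B) ^ d * (a (i + 1 + d) t * s m) ∈ A :=
      ih (i + 1) m t (by omega) (by omega) (by omega) ht htn
    have := A.sub_mem hv hih
    have heq : a i t * s (m + (d + 1)) - (-1 : B) ^ (d + 1) * (a (i + (d + 1)) t * s m)
        = (a (i + 1) t * s (m + d) + a i t * s (m + d + 1))
          - (a (i + 1) t * s (m + d) - (-1 : B) ^ d * (a (i + 1 + d) t * s m)) := by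
      have h1 : i + (d + 1) = i + 1 + d := by omega
      have h2 : m + (d + 1) = m + d + 1 := by omega
      rw [h1, h2]; ring
    rw [heq]; exact this

theorem stmt_3 {B : Type*} [CommRing B] (A : Subring B)
    (k n : ℕ) (hk : 1 ≤ k) (hn : 2 ≤ n)
    (a : ℕ → ℕ → B) (s : ℕ → B)
    (ha : ∀ i j, 1 ≤ i → i ≤ k + 1 → 1 ≤ j → j ≤ n → a i j ∈ A)
    (hlin : ∀ i j p, 1 ≤ i → i ≤ k → 1 ≤ j → j ≤ n → p ≤ k - 1 →
      a (i + 1) j * s p + a i j * s (p + 1) ∈ A) :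
    ∀ j m i l t, j ≤ k → m ≤ k → 1 ≤ i → i ≤ k + 1 → 1 ≤ l → l ≤ k + 1 →
      1 ≤ t → t ≤ n → l + m = i + j →
      a i t * s j - (((-1 : Bˣ) ^ ((j : ℤ) - (m : ℤ)) : Bˣ) : B) * (a l t * s m) ∈ A := by
  intro j m i l t hj hm hi hik hl hlk ht htn heq
  rw [val_neg_one_zpow]
  by_cases hle : i ≤ l
  · -- j ≥ m
    obtain ⟨d, hd⟩ : ∃ d, l = i + d := ⟨l - i, by omega⟩
    have hjm : j = m + d := by omega
    have hnab : ((j : ℤ) - (m : ℤ)).natAbs = d := by omega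
    rw [hnab, hjm, hd]
    exact aux_telescope A k n a s hlin d i m t hi (by omega) (by omega) ht htn
  · obtain ⟨d, hd⟩ : ∃ d, i = l + d := ⟨i - l, by omega⟩
    have hjm : m = j + d := by omega
    have hnab : ((j : ℤ) - (m : ℤ)).natAbs = d := by omega
    have hX : a l t * s (j + d) - (-1 : B) ^ d * (a (l + d) t * s j) ∈ A :=
      aux_telescope A k n a s hlin d l j t hl (by omega) (by omega) ht htn
    have hc : (-(-1 : B) ^ d) ∈ A := A.neg_mem (A.pow_mem (A.neg_mem A.one_mem) d)
    have := A.mul_mem hc hX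
    have hsq : (-1 : B) ^ d * (-1 : B) ^ d = 1 := by
      rw [← pow_add]; exact Even.neg_one_pow ⟨d, rfl⟩
    have heq2 : a i t * s j - (-1 : B) ^ ((j : ℤ) - (m : ℤ)).natAbs * (a l t * s m)
        = (-(-1 : B) ^ d) * (a l t * s (j + d) - (-1 : B) ^ d * (a (l + d) t * s j)) := by
      rw [hnab, hjm, hd]
      linear_combination (-(a (l + d) t * s j)) * hsq
    rw [heq2]; exact this
end

section
/- Let A ⊆ B be an extension of commutative rings, let k ≥ 1 and n ≥ 2 be integers, let a_{ij} ∈ A for 1 ≤ i ≤ k+1 and 1 ≤ j ≤ n, and let s_0, …, s_k ∈ B. Assume that a_{i+1,j}·s_p + a_{i,j}·s_{p+1} ∈ A for all 1 ≤ i ≤ k, 1 ≤ j ≤ n and 0 ≤ p ≤ k−1. Then for all 0 ≤ i, j, l, m ≤ k with l + m = i + j, the element a_{11}^{|i−l|}·(s_i·s_j − s_l·s_m) lies in the A-submodule of B generated by 1, s_0, s_1, …, s_k. -/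
/-!
If `β s_p + α s_{p+1} ∈ A` for consecutive indices, then
`α (s_{i+1} s_j - s_i s_{j+1}) = (β s_i + α s_{i+1}) s_j - (β s_j + α s_{j+1}) s_i`
is an `A`-combination of the `s_p`. A general difference `s_i s_j - s_l s_m` with
`l + m = i + j` telescopes into `|i - l|` such adjacent differences, each step costing one
factor of `α`.
-/

section QuadraticRelations

variable {B : Type*} [CommRing B] {A : Subring B} {M : Submodule A B}
  {s : ℕ → B} {α β : B} {k : ℕ}

theorem Submodule.mul_mem_of_mem_subring {b x : B} (hb : b ∈ A) (hx : x ∈ M) :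
    b * x ∈ M :=
  M.smul_mem ⟨b, hb⟩ hx

theorem adjacent_quadratic_relation_mem (hs : ∀ p ≤ k, s p ∈ M)
    (hrel : ∀ p, p + 1 ≤ k → β * s p + α * s (p + 1) ∈ A)
    {i j : ℕ} (hi : i + 1 ≤ k) (hj : j + 1 ≤ k) :
    α * (s (i + 1) * s j - s i * s (j + 1)) ∈ M := by
  have key : α * (s (i + 1) * s j - s i * s (j + 1)) =
      (β * s i + α * s (i + 1)) * s j - (β * s j + α * s (j + 1)) * s i := by ring
  rw [key]
  exact M.sub_mem (Submodule.mul_mem_of_mem_subring (hrel i hi) (hs j (by omega)))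
    (Submodule.mul_mem_of_mem_subring (hrel j hj) (hs i (by omega)))

theorem quadratic_relation_mem (hs : ∀ p ≤ k, s p ∈ M)
    (hrel : ∀ p, p + 1 ≤ k → β * s p + α * s (p + 1) ∈ A) (hα : α ∈ A) (d : ℕ) :
    ∀ {l j : ℕ}, l + d ≤ k → j + d ≤ k →
      α ^ d * (s (l + d) * s j - s l * s (j + d)) ∈ M := by
  induction d with
  | zero => simp
  | succ d ih =>
    intro l j hl hj
    have split : α ^ (d + 1) * (s (l + (d + 1)) * s j - s l * s (j + (d + 1))) =
        α ^ d * (α * (s (l + d + 1) * s j - s (l + d) * s (j + 1)))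
          + α * (α ^ d * (s (l + d) * s (j + 1) - s l * s (j + 1 + d))) := by
      rw [show l + (d + 1) = l + d + 1 by omega, show j + (d + 1) = j + 1 + d by omega]
      ring
    rw [split]
    exact M.add_mem
      (Submodule.mul_mem_of_mem_subring (pow_mem hα d)
        (adjacent_quadratic_relation_mem hs hrel (by omega) (by omega)))
      (Submodule.mul_mem_of_mem_subring hα (ih (by omega) (by omega)))

end QuadraticRelations

theorem stmt_4_general {B : Type*} [CommRing B] (A : Subring B)
    (k n : ℕ) (hn : 2 ≤ n)
    (a : ℕ → ℕ → B) (s : ℕ → B)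
    (ha : ∀ i j, 1 ≤ i → i ≤ k + 1 → 1 ≤ j → j ≤ n → a i j ∈ A)
    (hlin : ∀ i j p, 1 ≤ i → i ≤ k → 1 ≤ j → j ≤ n → p ≤ k - 1 →
      a (i + 1) j * s p + a i j * s (p + 1) ∈ A) :
    ∀ i j l m, i ≤ k → j ≤ k → l ≤ k → m ≤ k → l + m = i + j →
      a 1 1 ^ (((i : ℤ) - (l : ℤ)).natAbs) * (s i * s j - s l * s m) ∈
        Submodule.span A (({1} : Set B) ∪ {x | ∃ p ≤ k, x = s p}) := by
  intro i j l m hi hj hl hm hsum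
  have hs : ∀ p ≤ k, s p ∈ Submodule.span A (({1} : Set B) ∪ {x | ∃ p ≤ k, x = s p}) :=
    fun p hp => Submodule.subset_span (Or.inr ⟨p, hp, rfl⟩)
  have hrel : ∀ p, p + 1 ≤ k → a 2 1 * s p + a 1 1 * s (p + 1) ∈ A :=
    fun p hp => hlin 1 1 p le_rfl (by omega) le_rfl (by omega) (by omega)
  have hα : a 1 1 ∈ A := ha 1 1 le_rfl (by omega) le_rfl (by omega)
  rcases le_total l i with hli | hil
  · obtain ⟨d, rfl⟩ : ∃ d, i = l + d := ⟨i - l, by omega⟩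
    obtain rfl : m = j + d := by omega
    rw [show ((l + d : ℕ) - (l : ℤ)).natAbs = d by omega]
    exact quadratic_relation_mem hs hrel hα d hi hm
  · obtain ⟨d, rfl⟩ : ∃ d, l = i + d := ⟨l - i, by omega⟩
    obtain rfl : j = m + d := by omega
    rw [show ((i : ℤ) - (i + d : ℕ)).natAbs = d by omega, ← neg_sub, mul_neg]
    exact Submodule.neg_mem _ (quadratic_relation_mem hs hrel hα d hl hj)

theorem stmt_4 {B : Type*} [CommRing B] (A : Subring B)
    (k n : ℕ) (hk : 1 ≤ k) (hn : 2 ≤ n)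
    (a : ℕ → ℕ → B) (s : ℕ → B)
    (ha : ∀ i j, 1 ≤ i → i ≤ k + 1 → 1 ≤ j → j ≤ n → a i j ∈ A)
    (hlin : ∀ i j p, 1 ≤ i → i ≤ k → 1 ≤ j → j ≤ n → p ≤ k - 1 →
      a (i + 1) j * s p + a i j * s (p + 1) ∈ A) :
    ∀ i j l m, i ≤ k → j ≤ k → l ≤ k → m ≤ k → l + m = i + j →
      a 1 1 ^ (((i : ℤ) - (l : ℤ)).natAbs) * (s i * s j - s l * s m) ∈
        Submodule.span A (({1} : Set B) ∪ {x | ∃ p ≤ k, x = s p}) :=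
  stmt_4_general A k n hn a s ha hlin
end

section
/- Let A ⊆ B be an extension of commutative rings, let k ≥ 1 and n ≥ 2 be integers, let a_{ij} ∈ A for 1 ≤ i ≤ k+1 and 1 ≤ j ≤ n, let z ∈ A, and let s_0, …, s_k ∈ B. Assume that for all 1 ≤ i ≤ k, 1 ≤ j ≤ n and 0 ≤ p ≤ k−1 one has a_{i+1,j}·s_p + a_{i,j}·s_{p+1} ∈ A and z·a_{1,j}·s_p + a_{k+1,j}·s_{p+1} ∈ A. Then for every 1 ≤ i ≤ k, the element a_{11}·(s_k·s_i − (−1)^{k+1}·z·s_{i−1}·s_0) lies in A·s_i + A·s_0, the A-submodule of B generated by s_i and s_0. -/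
theorem stmt_5 {B : Type*} [CommRing B] (A : Subring B)
    (k n : ℕ) (hk : 1 ≤ k) (hn : 2 ≤ n)
    (a : ℕ → ℕ → B) (z : B) (s : ℕ → B)
    (ha : ∀ i j, 1 ≤ i → i ≤ k + 1 → 1 ≤ j → j ≤ n → a i j ∈ A)
    (hz : z ∈ A)
    (hlin : ∀ i j p, 1 ≤ i → i ≤ k → 1 ≤ j → j ≤ n → p ≤ k - 1 →
      a (i + 1) j * s p + a i j * s (p + 1) ∈ A)
    (hlin' : ∀ j p, 1 ≤ j → j ≤ n → p ≤ k - 1 →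
      z * a 1 j * s p + a (k + 1) j * s (p + 1) ∈ A) :
    ∀ i, 1 ≤ i → i ≤ k →
      a 1 1 * (s k * s i - (-1 : B) ^ (k + 1) * z * s (i - 1) * s 0) ∈
        Submodule.span A ({s i, s 0} : Set B) := by
  have h1n : (1:ℕ) ≤ n := le_trans (by norm_num) hn
  have hA : ∀ m, m ≤ k → a 1 1 * s k - (-1:B)^m * a (m+1) 1 * s (k - m) ∈ A := by
    intro m
    induction m with
    | zero =>
      intro _
      simpa using A.zero_mem
    | succ m ih =>
      intro hm
      have hm' : m ≤ k := Nat.le_of_succ_le hm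
      have u := ih hm'
      have h := hlin (m+1) 1 (k - (m+1)) (by omega) hm le_rfl h1n (by omega)
      have e : k - (m+1) + 1 = k - m := by omega
      rw [e] at h
      have key : a 1 1 * s k - (-1:B)^(m+1) * a (m+1+1) 1 * s (k - (m+1))
          = (a 1 1 * s k - (-1:B)^m * a (m+1) 1 * s (k-m))
            + (-1:B)^m * (a (m+1+1) 1 * s (k-(m+1)) + a (m+1) 1 * s (k-m)) := by
        ring
      rw [key]
      exact A.add_mem u (A.mul_mem (A.pow_mem (A.neg_mem A.one_mem) m) h)
  intro i hi hik
  have hc1 : a 1 1 * s k - (-1:B)^k * a (k+1) 1 * s 0 ∈ A := by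
    have := hA k le_rfl
    rwa [Nat.sub_self] at this
  have hv := hlin' 1 (i-1) le_rfl h1n (by omega)
  have ei : i - 1 + 1 = i := by omega
  rw [ei] at hv
  have hc2 : -((-1:B)^(k+1)) * (z * a 1 1 * s (i-1) + a (k+1) 1 * s i) ∈ A :=
    A.mul_mem (A.neg_mem (A.pow_mem (A.neg_mem A.one_mem) (k+1))) hv
  have key : a 1 1 * (s k * s i - (-1 : B) ^ (k + 1) * z * s (i - 1) * s 0)
      = (a 1 1 * s k - (-1:B)^k * a (k+1) 1 * s 0) * s i
        + (-((-1:B)^(k+1)) * (z * a 1 1 * s (i-1) + a (k+1) 1 * s i)) * s 0 := by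
    ring
  rw [key]
  have hsi : s i ∈ Submodule.span A ({s i, s 0} : Set B) :=
    Submodule.subset_span (by left; rfl)
  have hs0 : s 0 ∈ Submodule.span A ({s i, s 0} : Set B) :=
    Submodule.subset_span (by right; rfl)
  exact Submodule.add_mem _
    (Submodule.smul_mem _ (⟨_, hc1⟩ : A) hsi)
    (Submodule.smul_mem _ (⟨_, hc2⟩ : A) hs0)
end

section
/- Let ψ : O_amb → ℤ[x_1, …, x_n, t] be the ring homomorphism determined by ψ(a_{ij}) = x_j·t^{i−1} for 1 ≤ i ≤ k+1, 1 ≤ j ≤ n and ψ(z) = t^{k+1}. Then the kernel of ψ is exactly the ideal I_D. -/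
open MvPolynomial

/-- The ambient polynomial ring `ℤ[a_{ij}, z]`, where the variable
`Sum.inl (i₀, j₀)` represents `a_{i₀+1, j₀+1}` (so `1 ≤ i ≤ k+1`, `1 ≤ j ≤ n`)
and `Sum.inr ()` represents `z`. -/
abbrev Oamb (k n : ℕ) := MvPolynomial ((Fin (k + 1) × Fin n) ⊕ Unit) ℤ

/-- Top row entries of the 2 × n(k+1) matrix `M`: the column `Sum.inl (i₀, j₀)`
(for `1 ≤ i ≤ k`) has top entry `a_{i+1,j}`, and the column `Sum.inr j₀` has top
entry `z·a_{1,j}`. -/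
noncomputable def Mtop (k n : ℕ) : (Fin k × Fin n) ⊕ Fin n → Oamb k n
  | .inl (i, j) => X (.inl (i.succ, j))
  | .inr j => X (.inr ()) * X (.inl (0, j))

/-- Bottom row entries of the matrix `M`: the column `Sum.inl (i₀, j₀)` has
bottom entry `a_{i,j}`, and the column `Sum.inr j₀` has bottom entry `a_{k+1,j}`. -/
noncomputable def Mbot (k n : ℕ) : (Fin k × Fin n) ⊕ Fin n → Oamb k n
  | .inl (i, j) => X (.inl (i.castSucc, j))
  | .inr j => X (.inl (Fin.last k, j))

/-- The ideal `I_D` generated by the 2 × 2 minors of `M`. -/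
noncomputable def ID (k n : ℕ) : Ideal (Oamb k n) :=
  Ideal.span {p | ∃ c c', p = Mtop k n c * Mbot k n c' - Mtop k n c' * Mbot k n c}

/-- The ring homomorphism `ψ : O_amb → ℤ[x_1, …, x_n, t]` with
`ψ(a_{ij}) = x_j t^{i-1}` and `ψ(z) = t^{k+1}`, where `Sum.inl j₀` represents
`x_{j₀+1}` and `Sum.inr ()` represents `t`. -/
noncomputable def ψ (k n : ℕ) : Oamb k n →+* MvPolynomial (Fin n ⊕ Unit) ℤ :=
  (MvPolynomial.aeval (fun v : (Fin (k + 1) × Fin n) ⊕ Unit => match v with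
    | .inl (i, j) => X (.inl j) * X (.inr ()) ^ (i : ℕ)
    | .inr _ => X (.inr ()) ^ (k + 1))).toRingHom

/-!
`ψ` maps monomials to monomials, so its kernel is spanned by the binomials `X^u - X^v` with
`ψ (X^u) = ψ (X^v)`: it suffices that modulo `I_D` a monomial depends only on its image, i.e. on
its column degrees `d_j` and its `t`-degree `N`. Give `a_{ij}` the weight `i - 1` and `z` the
weight `k + 1`. The minors say that weight can be moved between two `a`-factors, and that two
`a`-factors of total weight at least `k + 1` can hand `k + 1` of it to a new factor `z`. Hence
modulo `I_D` every monomial equals `z^(N / (k+1)) · a_{N % (k+1) + 1, j₀} · ∏ a_{1, j}`, with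
one factor for each remaining occurrence of a column, for any column `j₀` that occurs in it; this
depends on `(d, N)` only.
-/

open Finsupp

theorem MvPolynomial.aeval_monomial_eq_monomial {R σ τ : Type*} [CommSemiring R]
    (e : σ → τ →₀ ℕ) (u : σ →₀ ℕ) (c : R) :
    aeval (fun x => monomial (e x) (1 : R)) (monomial u c) =
      monomial (linearCombination ℕ e u) c := by
  rw [aeval_monomial, linearCombination_apply, monomial_finsupp_sum_index, algebraMap_eq]
  simp_rw [monomial_pow, one_pow]

theorem MvPolynomial.ker_le_ker_of_monomial {R A σ τ : Type*} [CommSemiring R] [AddCommMonoid A]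
    [Module R A] {φ : MvPolynomial σ R →ₗ[R] MvPolynomial τ R} {π : MvPolynomial σ R →ₗ[R] A}
    {f : (σ →₀ ℕ) → τ →₀ ℕ} (hφ : ∀ u, φ (monomial u 1) = monomial (f u) 1)
    (hπ : ∀ u v, f u = f v → π (monomial u 1) = π (monomial v 1)) :
    LinearMap.ker φ ≤ LinearMap.ker π := by
  have hfactor : π = (basisMonomials τ R).constr R
      (fun w => π (monomial (Function.invFun f w) 1)) ∘ₗ φ := by
    refine (basisMonomials σ R).ext fun u => ?_
    have := (basisMonomials τ R).constr_basis R (fun w => π (monomial (Function.invFun f w) 1)) (f u)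
    simp only [coe_basisMonomials] at this
    simp only [coe_basisMonomials, LinearMap.comp_apply, hφ, this]
    exact hπ _ _ (Function.invFun_eq ⟨u, rfl⟩).symm
  intro p hp
  rw [LinearMap.mem_ker] at hp ⊢
  rw [hfactor, LinearMap.comp_apply, hp, map_zero]

section Normalization

variable {A ι : Type*} [CommMonoid A]

/-- The relations among the classes `α p j` of `a_{p+1,j}` and `ζ` of `z` given by the minors of
two columns; they hold for `α p j = x_j t^p` and `ζ = t^(k+1)`. -/
structure ScrollRelations (k : ℕ) (α : ℕ → ι → A) (ζ : A) : Prop where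
  shift : ∀ p q j j', p < k → q < k → α (p + 1) j * α q j' = α (q + 1) j' * α p j
  wrap : ∀ p j j', p < k → α (p + 1) j * α k j' = ζ * α 0 j' * α p j

variable {k : ℕ} {α : ℕ → ι → A} {ζ : A}

namespace ScrollRelations

theorem transfer_add (h : ScrollRelations k α ζ) {p q m : ℕ} (hp : p + m ≤ k) (hq : q + m ≤ k)
    (j j' : ι) : α (p + m) j * α q j' = α p j * α (q + m) j' := by
  induction m generalizing p with
  | zero => rfl
  | succ m ih =>
    calc α (p + (m + 1)) j * α q j' = α (p + 1 + m) j * α q j' := by rw [add_right_comm, add_assoc]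
      _ = α (p + 1) j * α (q + m) j' := ih (by omega) (by omega)
      _ = α p j * α (q + (m + 1)) j' := by
        rw [h.shift p (q + m) j j' (by omega) (by omega), mul_comm, add_assoc]

theorem transfer (h : ScrollRelations k α ζ) {p q p' q' : ℕ} (hp : p ≤ k) (hq : q ≤ k)
    (hp' : p' ≤ k) (hq' : q' ≤ k) (hsum : p + q = p' + q') (j j' : ι) :
    α p j * α q j' = α p' j * α q' j' := by
  rcases le_total p' p with hle | hle
  · obtain ⟨m, rfl⟩ := Nat.exists_eq_add_of_le hle
    obtain rfl : q' = q + m := by omega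
    exact h.transfer_add hp hq' j j'
  · obtain ⟨m, rfl⟩ := Nat.exists_eq_add_of_le hle
    obtain rfl : q = q' + m := by omega
    exact (h.transfer_add hp' hq j j').symm

theorem mul_eq_zeta_pow_mul (h : ScrollRelations k α ζ) {p q : ℕ} (hp : p ≤ k) (hq : q ≤ k) (j j' : ι) :
    α p j * α q j' = ζ ^ ((p + q) / (k + 1)) * α ((p + q) % (k + 1)) j * α 0 j' := by
  rcases lt_or_ge (p + q) (k + 1) with hlt | hge
  · rw [Nat.div_eq_of_lt hlt, Nat.mod_eq_of_lt hlt, pow_zero, one_mul]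
    exact h.transfer hp hq (Nat.lt_succ_iff.mp hlt) (Nat.zero_le _) rfl j j'
  · obtain ⟨s, hs, hpq⟩ : ∃ s < k, p + q = s + (k + 1) := ⟨p + q - (k + 1), by omega, by omega⟩
    rw [hpq, Nat.add_div_right _ k.succ_pos, Nat.add_mod_right, Nat.div_eq_of_lt (by omega),
      Nat.mod_eq_of_lt (by omega), zero_add, pow_one]
    calc α p j * α q j' = α (s + 1) j * α k j' := h.transfer hp hq (by omega) le_rfl (by omega) j j'
      _ = ζ * α s j * α 0 j' := by rw [h.wrap s j j' hs, mul_right_comm]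

end ScrollRelations

variable (k α ζ)

noncomputable def normalForm (N : ℕ) (d : ι →₀ ℕ) (j₀ : ι) : A :=
  ζ ^ (N / (k + 1)) * α (N % (k + 1)) j₀ * (d - single j₀ 1).prod fun j m => α 0 j ^ m

def IsNormalForm (x : A) (N : ℕ) (d : ι →₀ ℕ) : Prop :=
  (d = 0 → (k + 1) ∣ N ∧ x = ζ ^ (N / (k + 1))) ∧ ∀ j₀, d j₀ ≠ 0 → x = normalForm k α ζ N d j₀

variable {k α ζ}

theorem zeta_mul_normalForm (N : ℕ) (d : ι →₀ ℕ) (j₀ : ι) :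
    ζ * normalForm k α ζ N d j₀ = normalForm k α ζ (N + (k + 1)) d j₀ := by
  rw [normalForm, normalForm, Nat.add_div_right _ k.succ_pos, Nat.add_mod_right, pow_succ]
  ac_rfl

theorem ScrollRelations.alpha_mul_normalForm (h : ScrollRelations k α ζ) {i N : ℕ} (hi : i ≤ k)
    (j : ι) {d : ι →₀ ℕ} {j₁ : ι} (hj₁ : d j₁ ≠ 0) :
    α i j * normalForm k α ζ N d j₁ = normalForm k α ζ (N + i) (d + single j 1) j₁ := by
  have hN : N + i = (k + 1) * (N / (k + 1)) + (N % (k + 1) + i) := by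
    rw [← add_assoc, Nat.div_add_mod]
  have hd : d + single j 1 - single j₁ 1 = d - single j₁ 1 + single j 1 :=
    (tsub_add_eq_add_tsub (single_le_iff.mpr (Nat.one_le_iff_ne_zero.mpr hj₁))).symm
  rw [normalForm, normalForm, hN, Nat.mul_add_div (Nat.zero_lt_succ k), Nat.mul_add_mod, hd,
    prod_add_index' (fun _ => pow_zero _) (fun _ _ _ => pow_add _ _ _),
    prod_single_index (h := fun x => HPow.hPow (α 0 x)) (pow_zero _), pow_add]
  calc α i j * (ζ ^ (N / (k + 1)) * α (N % (k + 1)) j₁ * (d - single j₁ 1).prod fun j m => α 0 j ^ m)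
      = ζ ^ (N / (k + 1)) * ((d - single j₁ 1).prod fun j m => α 0 j ^ m) *
          (α (N % (k + 1)) j₁ * α i j) := by ac_rfl
    _ = _ := by rw [h.mul_eq_zeta_pow_mul (Nat.le_of_lt_succ (Nat.mod_lt N k.succ_pos)) hi, pow_one]; ac_rfl

theorem ScrollRelations.normalForm_eq_normalForm (h : ScrollRelations k α ζ) (N : ℕ) {d : ι →₀ ℕ} {j₀ j₁ : ι}
    (hj₀ : d j₀ ≠ 0) (hj₁ : d j₁ ≠ 0) : normalForm k α ζ N d j₀ = normalForm k α ζ N d j₁ := by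
  obtain rfl | hne := eq_or_ne j₀ j₁
  · rfl
  have hsplit : ∀ {a b : ι}, a ≠ b → d b ≠ 0 →
      d - single a 1 = (d - single a 1 - single b 1) + single b 1 := fun hab hb =>
    (tsub_add_cancel_of_le (single_le_iff.mpr (by simp [hab]; omega))).symm
  rw [normalForm, normalForm, hsplit hne hj₁, hsplit hne.symm hj₀, tsub_right_comm,
    prod_add_index' (fun _ => pow_zero _) (fun _ _ _ => pow_add _ _ _),
    prod_add_index' (fun _ => pow_zero _) (fun _ _ _ => pow_add _ _ _),
    prod_single_index (h := fun x => HPow.hPow (α 0 x)) (pow_zero _),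
    prod_single_index (h := fun x => HPow.hPow (α 0 x)) (pow_zero _)]
  have hr := Nat.le_of_lt_succ (Nat.mod_lt N k.succ_pos)
  have := h.transfer hr (Nat.zero_le k) (Nat.zero_le k) hr (add_comm _ _) j₀ j₁
  simp only [pow_one]
  generalize (d - single j₁ 1 - single j₀ 1).prod (fun x => HPow.hPow (α 0 x)) = P
  calc _ = ζ ^ (N / (k + 1)) * P * (α (N % (k + 1)) j₀ * α 0 j₁) := by ac_rfl
    _ = _ := by rw [this]; ac_rfl

theorem isNormalForm_one : IsNormalForm k α ζ 1 0 0 :=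
  ⟨fun _ => ⟨dvd_zero _, by simp⟩, fun _ h => absurd rfl h⟩

theorem IsNormalForm.zeta_mul {x : A} {N : ℕ} {d : ι →₀ ℕ} (hx : IsNormalForm k α ζ x N d) :
    IsNormalForm k α ζ (ζ * x) (N + (k + 1)) d := by
  refine ⟨fun hd => ?_, fun j₀ hj₀ => by rw [hx.2 j₀ hj₀, zeta_mul_normalForm]⟩
  obtain ⟨hdvd, rfl⟩ := hx.1 hd
  exact ⟨Nat.dvd_add_self_right.mpr hdvd, by rw [Nat.add_div_right _ k.succ_pos, pow_succ']⟩

theorem ScrollRelations.isNormalForm_alpha_mul (h : ScrollRelations k α ζ) {x : A} {N i : ℕ}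
    {d : ι →₀ ℕ} (hx : IsNormalForm k α ζ x N d) (hi : i ≤ k) (j : ι) :
    IsNormalForm k α ζ (α i j * x) (N + i) (d + single j 1) := by
  refine ⟨fun hd => absurd (DFunLike.congr_fun hd j) (by simp), fun j₀ hj₀ => ?_⟩
  rcases eq_or_ne d 0 with rfl | hd
  · obtain ⟨⟨q, rfl⟩, rfl⟩ := hx.1 rfl
    obtain rfl : j₀ = j := by by_contra hne; simp [single_eq_of_ne hne] at hj₀
    have hi' : i < k + 1 := Nat.lt_succ_of_le hi
    rw [zero_add, normalForm, Nat.mul_add_div k.succ_pos, Nat.mul_add_mod, Nat.div_eq_of_lt hi',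
      Nat.mod_eq_of_lt hi', Nat.mul_div_cancel_left _ k.succ_pos, add_zero, tsub_self,
      prod_zero_index, mul_one, mul_comm]
  · obtain ⟨j₁, hj₁ : d j₁ ≠ 0⟩ := DFunLike.ne_iff.mp hd
    rw [hx.2 j₁ hj₁, h.alpha_mul_normalForm hi j hj₁, h.normalForm_eq_normalForm _ (by simp [hj₁]) hj₀]

theorem IsNormalForm.unique {x y : A} {N : ℕ} {d : ι →₀ ℕ} (hx : IsNormalForm k α ζ x N d)
    (hy : IsNormalForm k α ζ y N d) : x = y := by
  rcases eq_or_ne d 0 with rfl | hd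
  · exact (hx.1 rfl).2.trans (hy.1 rfl).2.symm
  · obtain ⟨j₀, hj₀ : d j₀ ≠ 0⟩ := DFunLike.ne_iff.mp hd
    exact (hx.2 j₀ hj₀).trans (hy.2 j₀ hj₀).symm

end Normalization

variable {k n : ℕ}

noncomputable def psiWeight (k n : ℕ) : (Fin (k + 1) × Fin n) ⊕ Unit → Fin n ⊕ Unit →₀ ℕ
  | .inl (i, j) => single (Sum.inl j) 1 + single (Sum.inr ()) (i : ℕ)
  | .inr () => single (Sum.inr ()) (k + 1)

theorem psi_apply (p : Oamb k n) :
    ψ k n p = aeval (fun x => monomial (psiWeight k n x) (1 : ℤ)) p := by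
  show aeval _ p = aeval _ p
  congr 2
  funext x
  rcases x with ⟨i, j⟩ | ⟨⟩ <;> simp [psiWeight, X, monomial_pow, monomial_mul, pow_succ]

theorem psi_Mtop (c : (Fin k × Fin n) ⊕ Fin n) :
    ψ k n (Mtop k n c) = X (.inr ()) * ψ k n (Mbot k n c) := by
  rcases c with ⟨i, j⟩ | j <;> simp [Mtop, Mbot, ψ, pow_succ] <;> ring

theorem minor_mem_ID (c c' : (Fin k × Fin n) ⊕ Fin n) :
    Mtop k n c * Mbot k n c' - Mtop k n c' * Mbot k n c ∈ ID k n :=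
  Ideal.subset_span ⟨c, c', rfl⟩

open Fin.NatCast in
noncomputable def abar (k n : ℕ) (p : ℕ) (j : Fin n) : Oamb k n ⧸ ID k n :=
  Ideal.Quotient.mk (ID k n) (X (.inl (p, j)))

noncomputable def zbar (k n : ℕ) : Oamb k n ⧸ ID k n := Ideal.Quotient.mk (ID k n) (X (.inr ()))

theorem scrollRelations_ID : ScrollRelations k (abar k n) (zbar k n) where
  shift p q j j' hp hq := by
    have := Ideal.Quotient.eq.mpr (minor_mem_ID (.inl (⟨p, hp⟩, j)) (.inl (⟨q, hq⟩, j')))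
    simp only [Mtop, Mbot, map_mul] at this
    simp (disch := omega) only [abar, Fin.natCast_eq_mk]
    exact this
  wrap p j j' hp := by
    have := Ideal.Quotient.eq.mpr (minor_mem_ID (.inl (⟨p, hp⟩, j)) (.inr j'))
    simp only [Mtop, Mbot, map_mul] at this
    simp (disch := omega) only [abar, Fin.natCast_eq_mk]
    exact this

theorem isNormalForm_mk_monomial_single_add (x : (Fin (k + 1) × Fin n) ⊕ Unit)
    {u : (Fin (k + 1) × Fin n) ⊕ Unit →₀ ℕ}
    (hu : IsNormalForm k (abar k n) (zbar k n) (Ideal.Quotient.mk (ID k n) (monomial u 1))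
      (linearCombination ℕ (psiWeight k n) u (.inr ()))
      (sumFinsuppAddEquivProdFinsupp (linearCombination ℕ (psiWeight k n) u)).1) :
    IsNormalForm k (abar k n) (zbar k n) (Ideal.Quotient.mk (ID k n) (monomial (single x 1 + u) 1))
      (linearCombination ℕ (psiWeight k n) (single x 1 + u) (.inr ()))
      (sumFinsuppAddEquivProdFinsupp (linearCombination ℕ (psiWeight k n) (single x 1 + u))).1 := by
  rw [monomial_single_add, pow_one, map_mul, map_add, map_add, linearCombination_single, one_smul,
    Prod.fst_add, Finsupp.add_apply]
  set w := linearCombination ℕ (psiWeight k n) u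
  rcases x with ⟨i, j⟩ | ⟨⟨⟩⟩
  · have hX : Ideal.Quotient.mk (ID k n) (X (.inl (i, j))) = abar k n i j := by simp [abar]
    have hN : psiWeight k n (.inl (i, j)) (.inr ()) + w (.inr ()) = w (.inr ()) + i := by
      simp [psiWeight, add_comm]
    have hd : (sumFinsuppAddEquivProdFinsupp (psiWeight k n (.inl (i, j)))).1 +
        (sumFinsuppAddEquivProdFinsupp w).1 = (sumFinsuppAddEquivProdFinsupp w).1 + single j 1 := by
      ext; simp [psiWeight, single_apply, add_comm]
    rw [hX, hN, hd]
    exact scrollRelations_ID.isNormalForm_alpha_mul hu i.is_le j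
  · have hN : psiWeight k n (.inr ()) (.inr ()) + w (.inr ()) = w (.inr ()) + (k + 1) := by
      simp [psiWeight, add_comm]
    have hd : (sumFinsuppAddEquivProdFinsupp (psiWeight k n (.inr ()))).1 +
        (sumFinsuppAddEquivProdFinsupp w).1 = (sumFinsuppAddEquivProdFinsupp w).1 := by
      ext; simp [psiWeight]
    rw [hN, hd]
    exact hu.zeta_mul

theorem isNormalForm_mk_monomial (u : (Fin (k + 1) × Fin n) ⊕ Unit →₀ ℕ) :
    IsNormalForm k (abar k n) (zbar k n) (Ideal.Quotient.mk (ID k n) (monomial u 1))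
      (linearCombination ℕ (psiWeight k n) u (.inr ()))
      (sumFinsuppAddEquivProdFinsupp (linearCombination ℕ (psiWeight k n) u)).1 := by
  induction u using Finsupp.induction with
  | zero => simpa using isNormalForm_one
  | single_add x b u hx hb ih =>
    clear hx hb
    induction b with
    | zero => simpa using ih
    | succ b ihb =>
      rw [add_comm b, single_add, add_assoc]
      exact isNormalForm_mk_monomial_single_add x ihb

theorem stmt_6_general (k n : ℕ) :
    RingHom.ker (ψ k n) = ID k n := by
  refine le_antisymm (fun p hp => ?_) ?_
  · have hker := ker_le_ker_of_monomial
      (φ := (aeval fun x => monomial (psiWeight k n x) (1 : ℤ)).toLinearMap)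
      (π := (Ideal.Quotient.mkₐ ℤ (ID k n)).toLinearMap)
      (fun u => aeval_monomial_eq_monomial _ u 1)
      (fun u v huv => (isNormalForm_mk_monomial u).unique (huv ▸ isNormalForm_mk_monomial v))
    have := hker (LinearMap.mem_ker.mpr ((psi_apply p).symm.trans (RingHom.mem_ker.mp hp)))
    exact Ideal.Quotient.eq_zero_iff_mem.mp (LinearMap.mem_ker.mp this)
  · rw [ID, Ideal.span_le]
    rintro _ ⟨c, c', rfl⟩
    rw [SetLike.mem_coe, RingHom.mem_ker, map_sub, map_mul, map_mul, psi_Mtop, psi_Mtop]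
    ring

theorem stmt_6 (k n : ℕ) (hk : 1 ≤ k) (hn : 2 ≤ n) :
    RingHom.ker (ψ k n) = ID k n :=
  stmt_6_general k n
end

section
/- The quotient ℤ[x_1, …, x_n, t]/S, taken as a quotient of modules over the subring ℤ[t^{k+1}] ⊆ S, is a free ℤ[t^{k+1}]-module of rank k with basis given by the residue classes of t, t², …, t^k. -/
open MvPolynomial

/-- The polynomial ring `ℤ[x_1, …, x_n, t]`: `Sum.inl j₀` represents `x_{j₀+1}`
and `Sum.inr ()` represents `t`. -/
abbrev Rpoly (n : ℕ) := MvPolynomial (Fin n ⊕ Unit) ℤ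

/-- The variable `t`. -/
noncomputable def tvar (n : ℕ) : Rpoly n := X (Sum.inr ())

/-- The subring `S` of `ℤ[x_1, …, x_n, t]` generated by the elements
`x_j·t^{i-1}` for `1 ≤ i ≤ k+1`, `1 ≤ j ≤ n`, together with `t^{k+1}`. -/
noncomputable def Sring (k n : ℕ) : Subring (Rpoly n) :=
  Subring.closure
    ({p | ∃ i ≤ k, ∃ j : Fin n, p = X (Sum.inl j) * tvar n ^ i} ∪ {tvar n ^ (k + 1)})

/-- The subring `ℤ[t^{k+1}]` of `ℤ[x_1, …, x_n, t]`. -/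
noncomputable def Cring (k n : ℕ) : Subring (Rpoly n) :=
  Subring.closure {tvar n ^ (k + 1)}


/-!
Killing the `x`-variables sends `S` into `ℤ[T^{k+1}]`, the polynomials supported in degrees
divisible by `k + 1`, while it is injective on `ℤ[t^{k+1}]`. Since the exponents `1, …, k` lie
in distinct nonzero residue classes modulo `k + 1`, a relation `∑ gᵢ t^{i+1} ∈ S` with
`gᵢ ∈ ℤ[t^{k+1}]` forces every `gᵢ` to vanish. Conversely, every monomial divisible by some `x_j`
already lies in `S` (as `S` contains `x_j t^i` for every `i`), and a pure power
`t^m = (t^{k+1})^e t^r` with `r ≤ k` is a `ℤ[t^{k+1}]`-multiple of `1` or of some `t^{i+1}`.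
-/

namespace Polynomial

variable {R : Type*} [CommSemiring R]

theorem coeff_eq_zero_of_mem_range_expand {d m : ℕ} (hd : 0 < d) {p : R[X]}
    (hp : p ∈ (expand R d).range) (hm : ¬ d ∣ m) : p.coeff m = 0 := by
  obtain ⟨f, rfl⟩ := (expand R d).mem_range.mp hp
  rw [coeff_expand hd, if_neg hm]

theorem coeff_sum_expand_mul_X_pow {k : ℕ} (f : Fin k → R[X]) (e : ℕ) (j : Fin k) :
    (∑ i, expand R (k + 1) (f i) * X ^ ((i : ℕ) + 1)).coeff ((k + 1) * e + (j + 1)) =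
      (f j).coeff e := by
  rw [finsetSum_coeff, Finset.sum_eq_single j, coeff_mul_X_pow, coeff_expand k.succ_pos,
    if_pos (dvd_mul_right _ _), Nat.mul_div_cancel_left _ k.succ_pos]
  · intro i _ hij
    rw [coeff_mul_X_pow']
    split_ifs with hle
    · refine coeff_eq_zero_of_mem_range_expand k.succ_pos ⟨f i, rfl⟩ fun hdvd => hij (Fin.ext ?_)
      have hmod : (i + 1 : ℕ) ≡ j + 1 [MOD k + 1] :=
        ((Nat.modEq_iff_dvd' hle).mpr hdvd).trans (by simp [Nat.ModEq])
      simpa using hmod.eq_of_lt_of_lt (by omega) (by omega)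
    · rfl
  · simp

theorem eq_zero_of_sum_mul_X_pow_mem_range_expand {k : ℕ} {c : Fin k → R[X]}
    (hc : ∀ i, c i ∈ (expand R (k + 1)).range)
    (h : ∑ i, c i * X ^ ((i : ℕ) + 1) ∈ (expand R (k + 1)).range) : c = 0 := by
  choose f hf using fun i => (expand R (k + 1)).mem_range.mp (hc i)
  have hf0 : f = 0 := by
    funext j
    ext e
    rw [Pi.zero_apply, coeff_zero, ← coeff_sum_expand_mul_X_pow f e j]
    simp only [hf]
    refine coeff_eq_zero_of_mem_range_expand k.succ_pos h ?_
    rw [Nat.dvd_add_right (dvd_mul_right _ _)]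
    exact Nat.not_dvd_of_pos_of_lt j.succ_pos (by omega)
  funext j
  simp [← hf, hf0]

end Polynomial

section

variable {k n : ℕ}

noncomputable def killX (n : ℕ) : Rpoly n →ₐ[ℤ] Polynomial ℤ :=
  aeval (Sum.elim 0 fun _ => Polynomial.X)

@[simp]
theorem killX_X_inl (j : Fin n) : killX n (X (Sum.inl j)) = 0 := by
  simp [killX]

@[simp]
theorem killX_tvar : killX n (tvar n) = Polynomial.X := by
  simp [killX, tvar]

theorem Cring_le_Sring : Cring k n ≤ Sring k n :=
  Subring.closure_mono Set.subset_union_right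

theorem tvar_pow_pow_mem_Cring (e : ℕ) : (tvar n ^ (k + 1)) ^ e ∈ Cring k n :=
  pow_mem (Subring.subset_closure (Set.mem_singleton _)) e

theorem tvar_pow_eq (k m : ℕ) :
    tvar n ^ m = (tvar n ^ (k + 1)) ^ (m / (k + 1)) * tvar n ^ (m % (k + 1)) := by
  rw [← pow_mul, ← pow_add, Nat.div_add_mod]

theorem killX_mem_range_expand {p : Rpoly n} (hp : p ∈ Sring k n) :
    killX n p ∈ (Polynomial.expand ℤ (k + 1)).range := by
  refine (Subring.closure_le (t := (Polynomial.expand ℤ (k + 1)).range.toSubring.comap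
    (killX n).toRingHom)).mpr ?_ hp
  rintro _ (⟨i, -, j, rfl⟩ | rfl)
  · exact ⟨0, by simp⟩
  · exact ⟨Polynomial.X, by simp⟩

theorem aeval_tvar_killX {c : Rpoly n} (hc : c ∈ Cring k n) :
    Polynomial.aeval (tvar n) (killX n c) = c := by
  refine RingHom.eqOn_set_closure (f := ((Polynomial.aeval (tvar n)).comp (killX n)).toRingHom)
    (g := RingHom.id _) ?_ hc
  rintro _ rfl
  simp

theorem mem_Sring_of_mem_span {p : Rpoly n}
    (hp : p ∈ Submodule.span (Cring k n) (Sring k n : Set (Rpoly n))) : p ∈ Sring k n := by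
  induction hp using Submodule.span_induction with
  | mem x hx => exact hx
  | zero => exact zero_mem _
  | add _ _ _ _ hx hy => exact add_mem hx hy
  | smul c _ _ hx => exact mul_mem (Cring_le_Sring c.2) hx

theorem eq_zero_of_sum_smul_tvar_pow_mem_span (g : Fin k → Cring k n)
    (h : ∑ i, g i • tvar n ^ ((i : ℕ) + 1) ∈
      Submodule.span (Cring k n) (Sring k n : Set (Rpoly n))) : g = 0 := by
  have hkill := killX_mem_range_expand (mem_Sring_of_mem_span h)
  simp only [map_sum, Subring.smul_def, smul_eq_mul, map_mul, map_pow, killX_tvar] at hkill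
  have hg := Polynomial.eq_zero_of_sum_mul_X_pow_mem_range_expand
    (fun i => killX_mem_range_expand (Cring_le_Sring (g i).2)) hkill
  funext i
  rw [Pi.zero_apply, ← Subtype.coe_inj, ← aeval_tvar_killX (g i).2, congrFun hg i]
  simp

theorem X_mul_tvar_pow_mem_Sring (j : Fin n) (i : ℕ) : X (Sum.inl j) * tvar n ^ i ∈ Sring k n := by
  rw [tvar_pow_eq k i, mul_left_comm]
  refine mul_mem (Cring_le_Sring (tvar_pow_pow_mem_Cring _)) (Subring.subset_closure ?_)
  exact Or.inl ⟨_, Nat.lt_succ_iff.mp (Nat.mod_lt _ k.succ_pos), j, rfl⟩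

theorem X_mul_mem_Sring (j : Fin n) (f : Rpoly n) : X (Sum.inl j) * f ∈ Sring k n := by
  suffices ∀ i, X (Sum.inl j) * tvar n ^ i * f ∈ Sring k n by simpa using this 0
  induction f using MvPolynomial.induction_on with
  | C a =>
    intro i
    rw [eq_intCast C a]
    exact mul_mem (X_mul_tvar_pow_mem_Sring j i) (intCast_mem _ a)
  | add p q hp hq =>
    intro i
    rw [mul_add]
    exact add_mem (hp i) (hq i)
  | mul_X p v hp =>
    intro i
    rcases v with l | ⟨⟩
    · rw [← mul_assoc]
      exact mul_mem (hp i) (by simpa using X_mul_tvar_pow_mem_Sring (k := k) l 0)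
    · convert hp (i + 1) using 1
      rw [tvar, pow_succ]
      ring

theorem tvar_pow_mem_span_sup (m : ℕ) :
    tvar n ^ m ∈ Submodule.span (Cring k n) (Sring k n : Set (Rpoly n)) ⊔
      Submodule.span (Cring k n) (Set.range fun i : Fin k => tvar n ^ ((i : ℕ) + 1)) := by
  rw [tvar_pow_eq k m]
  refine Submodule.smul_mem _ (⟨_, tvar_pow_pow_mem_Cring _⟩ : Cring k n) ?_
  have hr := Nat.mod_lt m (Nat.add_one_pos k)
  obtain hr0 | hrpos := Nat.eq_zero_or_pos (m % (k + 1))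
  · rw [hr0, pow_zero]
    exact Submodule.mem_sup_left (Submodule.subset_span (one_mem _))
  · exact Submodule.mem_sup_right (Submodule.subset_span
      ⟨⟨m % (k + 1) - 1, by omega⟩, congrArg (tvar n ^ ·) (Nat.sub_add_cancel hrpos)⟩)

theorem span_Sring_sup_span_tvar_pow :
    Submodule.span (Cring k n) (Sring k n : Set (Rpoly n)) ⊔
      Submodule.span (Cring k n) (Set.range fun i : Fin k => tvar n ^ ((i : ℕ) + 1)) = ⊤ := by
  refine Submodule.eq_top_iff'.mpr fun p => ?_
  induction p using MvPolynomial.induction_on' with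
  | monomial a c =>
    by_cases hx : ∃ j, a (Sum.inl j) ≠ 0
    · obtain ⟨j, hj⟩ := hx
      refine Submodule.mem_sup_left (Submodule.subset_span ?_)
      rw [← add_tsub_cancel_of_le (Finsupp.single_le_iff.mpr (Nat.one_le_iff_ne_zero.mpr hj)),
        monomial_single_add, pow_one]
      exact X_mul_mem_Sring j _
    · push Not at hx
      have ha : a = Finsupp.single (Sum.inr ()) (a (Sum.inr ())) := by
        ext (l | ⟨⟩) <;> simp [hx]
      rw [ha, ← C_mul_X_pow_eq_monomial, eq_intCast C c, ← zsmul_eq_mul]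
      exact zsmul_mem (tvar_pow_mem_span_sup _) c
  | add p q hp hq => exact add_mem hp hq

end

theorem stmt_8_general (k n : ℕ) :
    ∃ b : Module.Basis (Fin k) (Cring k n)
      (Rpoly n ⧸ Submodule.span (Cring k n) ((Sring k n : Set (Rpoly n)))),
      ∀ i : Fin k, b i = Submodule.Quotient.mk (tvar n ^ ((i : ℕ) + 1)) := by
  set N := Submodule.span (Cring k n) ((Sring k n : Set (Rpoly n)))
  set tpow : Fin k → Rpoly n := fun i => tvar n ^ ((i : ℕ) + 1)
  have hli : LinearIndependent (Cring k n) (N.mkQ ∘ tpow) := by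
    refine Fintype.linearIndependent_iff.mpr fun g hg =>
      congrFun (eq_zero_of_sum_smul_tvar_pow_mem_span g ?_)
    rw [← Submodule.Quotient.mk_eq_zero, ← Submodule.mkQ_apply, map_sum]
    simpa only [map_smul, Function.comp_apply] using hg
  have hsp : ⊤ ≤ Submodule.span (Cring k n) (Set.range (N.mkQ ∘ tpow)) := by
    rw [Set.range_comp, ← Submodule.map_span, ← bot_sup_eq (Submodule.map _ _),
      ← Submodule.mkQ_map_self N, ← Submodule.map_sup, span_Sring_sup_span_tvar_pow,
      Submodule.map_top, Submodule.range_mkQ]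
  exact ⟨Module.Basis.mk hli hsp, fun i => Module.Basis.mk_apply hli hsp i⟩

theorem stmt_8 (k n : ℕ) (hk : 1 ≤ k) (hn : 2 ≤ n) :
    ∃ b : Module.Basis (Fin k) (Cring k n)
      (Rpoly n ⧸ Submodule.span (Cring k n) ((Sring k n : Set (Rpoly n)))),
      ∀ i : Fin k, b i = Submodule.Quotient.mk (tvar n ^ ((i : ℕ) + 1)) :=
  stmt_8_general k n
end

section
/- The polynomial ring ℤ[x_1, …, x_n, t] is generated as an S-module by the k+1 elements 1, t, t², …, t^k, and it cannot be generated as an S-module by fewer than k+1 elements. -/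
open MvPolynomial

/-- The target ring `ℚ[X]/(X^(k+1))`. -/
abbrev Qring (k : ℕ) := AdjoinRoot ((Polynomial.X : Polynomial ℚ) ^ (k + 1))

/-- The ring hom `ℤ[x,t] → ℚ[X]/(X^(k+1))`, `x_j ↦ 0`, `t ↦ root`. -/
noncomputable def chi (k n : ℕ) : Rpoly n →+* Qring k :=
  (MvPolynomial.aeval
    (Sum.elim (fun _ : Fin n => (0 : Qring k)) (fun _ : Unit => AdjoinRoot.root _))).toRingHom

lemma chi_tvar (k n : ℕ) : chi k n (tvar n) = AdjoinRoot.root _ := by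
  simp [chi, tvar]

lemma root_pow_eq_zero (k : ℕ) :
    (AdjoinRoot.root ((Polynomial.X : Polynomial ℚ) ^ (k + 1))) ^ (k + 1) = 0 := by
  rw [← AdjoinRoot.mk_X, ← map_pow, AdjoinRoot.mk_self]

lemma chi_mem_S (k n : ℕ) {s : Rpoly n} (hs : s ∈ Sring k n) :
    ∃ c : ℤ, chi k n s = (c : Qring k) := by
  induction hs using Subring.closure_induction with
  | mem x hx =>
    refine ⟨0, ?_⟩
    rcases hx with h | h
    · obtain ⟨i, _, j, rfl⟩ := h
      simp [chi, tvar]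
    · simp only [Set.mem_singleton_iff] at h
      subst h
      rw [map_pow, chi_tvar, root_pow_eq_zero]
      simp
  | zero => exact ⟨0, by simp⟩
  | one => exact ⟨1, by simp⟩
  | add x y hx hy ihx ihy =>
    obtain ⟨c, hc⟩ := ihx; obtain ⟨d, hd⟩ := ihy
    exact ⟨c + d, by rw [map_add, hc, hd]; push_cast; ring⟩
  | neg x hx ihx =>
    obtain ⟨c, hc⟩ := ihx
    exact ⟨-c, by rw [map_neg, hc]; push_cast; ring⟩
  | mul x y hx hy ihx ihy =>
    obtain ⟨c, hc⟩ := ihx; obtain ⟨d, hd⟩ := ihy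
    exact ⟨c * d, by rw [map_mul, hc, hd]; push_cast; ring⟩

lemma span_pows_top (k n : ℕ) :
    Submodule.span (Sring k n) (Set.range fun i : Fin (k + 1) => tvar n ^ (i : ℕ)) = ⊤ := by
  set M := Submodule.span (Sring k n) (Set.range fun i : Fin (k + 1) => tvar n ^ (i : ℕ)) with hM
  rw [eq_top_iff]
  intro p hp'
  clear hp'
  have hpow : ∀ i : ℕ, i ≤ k → tvar n ^ i ∈ M := fun i hi =>
    Submodule.subset_span ⟨⟨i, Nat.lt_succ_of_le hi⟩, rfl⟩
  have h1 : (1 : Rpoly n) ∈ M := by simpa using hpow 0 (Nat.zero_le k)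
  have hsmul : ∀ (s : Rpoly n) (hs : s ∈ Sring k n) (q : Rpoly n), q ∈ M → s * q ∈ M := by
    intro s hs q hq
    have := Submodule.smul_mem M (⟨s, hs⟩ : Sring k n) hq
    simpa [Subring.smul_def, smul_eq_mul] using this
  have htk1 : tvar n ^ (k + 1) ∈ Sring k n :=
    Subring.subset_closure (Or.inr rfl)
  have hX : ∀ (v : Fin n ⊕ Unit) (q : Rpoly n), q ∈ M → X v * q ∈ M := by
    intro v q hq
    induction hq using Submodule.span_induction with
    | mem x hx =>
      obtain ⟨i, rfl⟩ := hx
      cases v with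
      | inl j =>
        have hs : X (Sum.inl j) * tvar n ^ (i : ℕ) ∈ Sring k n :=
          Subring.subset_closure (Or.inl ⟨(i : ℕ), Nat.lt_succ_iff.mp i.isLt, j, rfl⟩)
        simpa using hsmul _ hs _ h1
      | inr u =>
        show X (Sum.inr u) * tvar n ^ (i : ℕ) ∈ M
        have : X (Sum.inr u) * tvar n ^ (i : ℕ) = tvar n ^ ((i : ℕ) + 1) := by
          cases u; rw [pow_succ, tvar]; ring
        rw [this]
        rcases lt_or_eq_of_le (Nat.lt_succ_iff.mp i.isLt) with h | h
        · exact hpow _ h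
        · rw [h]
          simpa using hsmul _ htk1 _ h1
    | zero => simpa using Submodule.zero_mem M
    | add x y hx hy ihx ihy => rw [mul_add]; exact Submodule.add_mem M ihx ihy
    | smul s x hx ihx =>
      have : X v * (s • x) = s • (X v * x) := by
        rw [Subring.smul_def, Subring.smul_def, smul_eq_mul, smul_eq_mul]; ring
      rw [this]
      exact Submodule.smul_mem M s ihx
  induction p using MvPolynomial.induction_on with
  | C a =>
    have ha : (C a : Rpoly n) ∈ Sring k n := by
      rw [show (C a : Rpoly n) = ((a : ℤ) : Rpoly n) from eq_intCast (C : ℤ →+* Rpoly n) a]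
      exact intCast_mem _ a
    simpa using hsmul _ ha _ h1
  | add p q hp hq => exact Submodule.add_mem M hp hq
  | mul_X p v hp => rw [mul_comm]; exact hX v p hp


theorem stmt_9 (k n : ℕ) (hk : 1 ≤ k) (hn : 2 ≤ n) :
    Submodule.span (Sring k n) (Set.range fun i : Fin (k + 1) => tvar n ^ (i : ℕ)) = ⊤ ∧
    ∀ (m : ℕ) (f : Fin m → Rpoly n),
      Submodule.span (Sring k n) (Set.range f) = ⊤ → k + 1 ≤ m := by
  refine ⟨span_pows_top k n, ?_⟩
  intro m f hspan
  -- push everything through `chi` into `ℚ[X]/(X^(k+1))`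
  have hmono : ((Polynomial.X : Polynomial ℚ) ^ (k + 1)).Monic := Polynomial.monic_X_pow _
  have key : ∀ p : Rpoly n, chi k n p ∈ Submodule.span ℚ (Set.range (chi k n ∘ f)) := by
    intro p
    have hp : p ∈ Submodule.span (Sring k n) (Set.range f) := hspan ▸ Submodule.mem_top
    induction hp using Submodule.span_induction with
    | mem x hx =>
      obtain ⟨i, rfl⟩ := hx
      exact Submodule.subset_span ⟨i, rfl⟩
    | zero => simpa using Submodule.zero_mem _
    | add x y hx hy ihx ihy => rw [map_add]; exact Submodule.add_mem _ ihx ihy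
    | smul s x hx ihx =>
      obtain ⟨c, hc⟩ := chi_mem_S k n s.2
      have : chi k n (s • x) = (c : ℚ) • chi k n x := by
        rw [Subring.smul_def, smul_eq_mul, map_mul, hc, Algebra.smul_def, map_intCast]
      rw [this]
      exact Submodule.smul_mem _ _ ihx
  have hbasis := (AdjoinRoot.powerBasis' hmono).basis
  have htop : Submodule.span ℚ (Set.range (chi k n ∘ f)) = ⊤ := by
    rw [eq_top_iff, ← (AdjoinRoot.powerBasis' hmono).basis.span_eq, Submodule.span_le]
    rintro x ⟨i, rfl⟩
    simp only [PowerBasis.coe_basis, SetLike.mem_coe]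
    have : (AdjoinRoot.powerBasis' hmono).gen ^ (i : ℕ) = chi k n (tvar n ^ (i : ℕ)) := by
      rw [map_pow, chi_tvar, AdjoinRoot.powerBasis'_gen]
    rw [this]
    exact key _
  have hfr : Module.finrank ℚ (Qring k) = k + 1 := by
    rw [(AdjoinRoot.powerBasis' hmono).finrank, AdjoinRoot.powerBasis'_dim,
      Polynomial.natDegree_X_pow]
  calc k + 1 = Module.finrank ℚ (Qring k) := hfr.symm
    _ ≤ Fintype.card (Fin m) := finrank_le_of_span_eq_top htop
    _ = m := Fintype.card_fin m
end

section
/- Let A be a commutative Noetherian ring and J an ideal of A containing an A-regular sequence of length two. Then the natural map A → Hom_A(J, A), sending a ∈ A to the multiplication map x ↦ a·x, is an isomorphism of A-modules. -/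
open Pointwise

theorem stmt_11 {A : Type*} [CommRing A] [IsNoetherianRing A] (J : Ideal A)
    (h : ∃ a₁ a₂ : A, a₁ ∈ J ∧ a₂ ∈ J ∧ RingTheory.Sequence.IsRegular A [a₁, a₂]) :
    ∃ e : A ≃ₗ[A] (J →ₗ[A] A),
      ∀ (a : A) (x : J), e a x = a * (x : A) := by
  obtain ⟨a₁, a₂, h₁J, h₂J, hreg⟩ := h
  rw [RingTheory.Sequence.isRegular_cons_iff] at hreg
  obtain ⟨hr₁, hreg⟩ := hreg
  rw [RingTheory.Sequence.isRegular_cons_iff] at hreg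
  obtain ⟨hr₂, -⟩ := hreg
  -- hr₁ : IsSMulRegular A a₁, hr₂ : IsSMulRegular (QuotSMulTop a₁ A) a₂
  set θ : A →ₗ[A] (J →ₗ[A] A) :=
    { toFun := fun a =>
        { toFun := fun x => a * (x : A)
          map_add' := by intros; simp [mul_add]
          map_smul' := by intros; simp [mul_comm, mul_assoc, mul_left_comm] }
      map_add' := by intros; ext x; simp [add_mul]
      map_smul' := by intros; ext x; simp [mul_assoc] } with hθ
  have hinj : Function.Injective θ := by
    intro a b hab
    have := LinearMap.congr_fun hab ⟨a₁, h₁J⟩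
    simp only [hθ, LinearMap.coe_mk, AddHom.coe_mk] at this
    have : a₁ * a = a₁ * b := by rw [mul_comm a₁ a, mul_comm a₁ b]; exact this
    exact hr₁ this
  have hsurj : Function.Surjective θ := by
    intro φ
    set c := φ ⟨a₁, h₁J⟩ with hc
    have key : ∀ (x : A) (hx : x ∈ J), a₁ * φ ⟨x, hx⟩ = c * x := by
      intro x hx
      have h1 : a₁ • (⟨x, hx⟩ : J) = x • (⟨a₁, h₁J⟩ : J) := by
        ext; simp [smul_eq_mul, mul_comm]
      calc a₁ * φ ⟨x, hx⟩ = a₁ • φ ⟨x, hx⟩ := rfl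
        _ = φ (a₁ • ⟨x, hx⟩) := (φ.map_smul a₁ _).symm
        _ = φ (x • ⟨a₁, h₁J⟩) := by rw [h1]
        _ = x • φ ⟨a₁, h₁J⟩ := φ.map_smul x _
        _ = c * x := by rw [smul_eq_mul, mul_comm, hc]
    -- c * a₂ = a₁ * φ ⟨a₂, h₂J⟩ ∈ (a₁)
    have hspan : a₁ • (⊤ : Submodule A A) = Ideal.span {a₁} := by
      rw [← Submodule.ideal_span_singleton_smul, smul_eq_mul, Ideal.mul_top]
    have hca₂ : c ∈ a₁ • (⊤ : Submodule A A) := by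
      have hmem : a₂ • c ∈ a₁ • (⊤ : Submodule A A) := by
        have : a₂ • c = a₁ • φ ⟨a₂, h₂J⟩ := by
          rw [smul_eq_mul, smul_eq_mul, mul_comm a₂ c, key a₂ h₂J]
        rw [this]
        exact Submodule.smul_mem_pointwise_smul _ _ _ Submodule.mem_top
      have hq : a₂ • (Submodule.Quotient.mk c : QuotSMulTop a₁ A) = 0 := by
        rw [← Submodule.Quotient.mk_smul, Submodule.Quotient.mk_eq_zero]
        exact hmem
      have h0 : a₂ • (Submodule.Quotient.mk c : QuotSMulTop a₁ A)
          = a₂ • (0 : QuotSMulTop a₁ A) := by rw [hq, smul_zero]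
      have := hr₂ h0
      rwa [← Submodule.Quotient.mk_eq_zero (p := a₁ • (⊤ : Submodule A A))]
    rw [hspan, Ideal.mem_span_singleton] at hca₂
    obtain ⟨b, hb⟩ := hca₂
    refine ⟨b, ?_⟩
    ext x
    simp only [hθ, LinearMap.coe_mk, AddHom.coe_mk]
    obtain ⟨x, hx⟩ := x
    have : a₁ * (b * x) = a₁ * φ ⟨x, hx⟩ := by
      rw [key x hx, hb]; ring
    exact hr₁ this
  exact ⟨LinearEquiv.ofBijective θ ⟨hinj, hsurj⟩, fun a x => rfl⟩
end
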